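/- Let Z ∈ ℂ^{N×N} be invertible, V ∈ ℂ^N, I = Z⁻¹V, and let g(I) = (Iᴴ A I)/(Iᴴ B I) for Hermitian matrices A, B with Iᴴ B I ≠ 0. If Z depends smoothly on a real parameter ρ through Z(ρ) = Z₀ + R(ρ)Ψ with R: ℝ → ℝ smooth and Ψ real symmetric, then dg/dρ = 2 Re{λᵀ (dR/dρ) Ψ I}, where λ solves Zᵀ λ = −(∂g/∂I)ᵀ and ∂g/∂I = (Iᴴ(A − g B))/(Iᴴ B I) treating g as a function of I with I and its conjugate varied consistently. -/

import Mathlib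

open Matrix

attribute [local instance] Matrix.linftyOpNormedRing Matrix.linftyOpNormedAlgebra

private lemma quadform_hasDerivAt {N : ℕ} (A : Matrix (Fin N) (Fin N) ℂ)
    (w : ℝ → Fin N → ℂ) (w' : Fin N → ℂ) (x : ℝ)
    (hw : ∀ k, HasDerivAt (fun ρ => w ρ k) (w' k) x) :
    HasDerivAt (fun ρ => star (w ρ) ⬝ᵥ (A *ᵥ w ρ))
      (star w' ⬝ᵥ (A *ᵥ w x) + star (w x) ⬝ᵥ (A *ᵥ w')) x := by
  have key : HasDerivAt (fun ρ => ∑ k, star (w ρ k) * ∑ j, A k j * w ρ j)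
      (∑ k, (star (w' k) * ∑ j, A k j * w x j + star (w x k) * ∑ j, A k j * w' j)) x :=
    HasDerivAt.fun_sum fun k _ =>
      ((hw k).star.mul (HasDerivAt.fun_sum fun j _ => (hw j).const_mul (A k j)))
  convert key using 1
  all_goals simp [dotProduct, mulVec, Finset.sum_add_distrib, Finset.mul_sum]

private lemma herm_dot_conj {N : ℕ} {M : Matrix (Fin N) (Fin N) ℂ} (hM : M.IsHermitian)
    (x y : Fin N → ℂ) :
    (starRingEnd ℂ) (star x ⬝ᵥ (M *ᵥ y)) = star y ⬝ᵥ (M *ᵥ x) := by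
  have h1 := star_dotProduct_star (v := M *ᵥ y) (w := star x)
  rw [star_star] at h1
  calc (starRingEnd ℂ) (star x ⬝ᵥ (M *ᵥ y)) = star (star x ⬝ᵥ (M *ᵥ y)) := rfl
    _ = star (M *ᵥ y) ⬝ᵥ x := h1.symm
    _ = (star y ᵥ* Mᴴ) ⬝ᵥ x := by rw [star_mulVec]
    _ = (star y ᵥ* M) ⬝ᵥ x := by rw [hM.eq]
    _ = star y ⬝ᵥ (M *ᵥ x) := (dotProduct_mulVec _ _ _).symm

theorem adjoint_sensitivity_rayleigh (N : ℕ)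
    (Z0 Ψ A B : Matrix (Fin N) (Fin N) ℂ)
    (hA : A.IsHermitian) (hB : B.IsHermitian)
    (hΨsymm : Ψᵀ = Ψ) (hΨreal : ∀ i j, (Ψ i j).im = 0)
    (R : ℝ → ℝ) (R' : ℝ → ℝ) (hR : ContDiff ℝ (⊤ : ℕ∞) R) (hR' : ∀ ρ, HasDerivAt R (R' ρ) ρ)
    (V : Fin N → ℂ) (ρ0 : ℝ)
    (Z : ℝ → Matrix (Fin N) (Fin N) ℂ)
    (hZ : ∀ ρ, Z ρ = Z0 + (R ρ : ℂ) • Ψ)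
    (hinv : IsUnit (Z ρ0))
    (I : Fin N → ℂ) (hI : I = (Z ρ0)⁻¹ *ᵥ V)
    (d : ℂ) (hd : d = star I ⬝ᵥ (B *ᵥ I)) (hd0 : d ≠ 0)
    (g : ℂ) (hg : g = (star I ⬝ᵥ (A *ᵥ I)) / d)
    (lam : Fin N → ℂ)
    (hlam : (Z ρ0)ᵀ *ᵥ lam = -(d⁻¹ • ((Aᵀ - g • Bᵀ) *ᵥ star I))) :
    HasDerivAt
      (fun ρ : ℝ =>
        ((star ((Z ρ)⁻¹ *ᵥ V) ⬝ᵥ (A *ᵥ ((Z ρ)⁻¹ *ᵥ V))).re /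
         (star ((Z ρ)⁻¹ *ᵥ V) ⬝ᵥ (B *ᵥ ((Z ρ)⁻¹ *ᵥ V))).re))
      (2 * (lam ⬝ᵥ (((R' ρ0 : ℂ) • Ψ) *ᵥ I)).re) ρ0 := by
  classical
  set W : Matrix (Fin N) (Fin N) ℂ := (R' ρ0 : ℂ) • Ψ with hWdef
  set Zi : Matrix (Fin N) (Fin N) ℂ := (Z ρ0)⁻¹ with hZidef
  -- derivative of Z
  have hZd : HasDerivAt Z W ρ0 := by
    have h1 : HasDerivAt (fun ρ : ℝ => ((R ρ : ℂ))) ((R' ρ0 : ℂ)) ρ0 := (hR' ρ0).ofReal_comp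
    have h2 := (hasDerivAt_const ρ0 Z0).add (h1.smul_const Ψ)
    rw [funext hZ]
    rw [zero_add] at h2
    exact h2
  -- derivative of the inverse
  have hdet : IsUnit (Z ρ0).det := (Matrix.isUnit_iff_isUnit_det _).mp hinv
  have hu : (hinv.unit : Matrix (Fin N) (Fin N) ℂ) = Z ρ0 := hinv.unit_spec
  have huinv : ((hinv.unit⁻¹ : (Matrix (Fin N) (Fin N) ℂ)ˣ) : Matrix (Fin N) (Fin N) ℂ) = Zi := by
    rw [hZidef, Matrix.nonsing_inv_eq_ringInverse]
    conv_rhs => rw [← hu]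
    rw [Ring.inverse_unit]
  have hDinv : HasDerivAt (fun ρ => (Z ρ)⁻¹) (-(Zi * W * Zi)) ρ0 := by
    have hfd := hasFDerivAt_ringInverse (𝕜 := ℝ) hinv.unit
    rw [hu] at hfd
    have hcomp := hfd.comp_hasDerivAt ρ0 hZd
    simp only [Matrix.nonsing_inv_eq_ringInverse]
    refine hcomp.congr_deriv ?_
    simp [huinv, ContinuousLinearMap.mulLeftRight_apply, mul_assoc]
  -- derivative of components of I(ρ)
  set I' : Fin N → ℂ := (-(Zi * W * Zi)) *ᵥ V with hI'def
  have hwk : ∀ k, HasDerivAt (fun ρ => ((Z ρ)⁻¹ *ᵥ V) k) (I' k) ρ0 := by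
    intro k
    let L : Matrix (Fin N) (Fin N) ℂ →ₗ[ℝ] ℂ :=
      { toFun := fun M => (M *ᵥ V) k
        map_add' := fun M M' => by simp [Matrix.add_mulVec]
        map_smul' := fun c M => by simp [Matrix.smul_mulVec, Complex.real_smul] }
    exact L.toContinuousLinearMap.hasFDerivAt.comp_hasDerivAt ρ0 hDinv
  -- quadratic forms
  have hIw : (fun ρ => (Z ρ)⁻¹ *ᵥ V) ρ0 = I := hI.symm
  have hnum : HasDerivAt (fun ρ => star ((Z ρ)⁻¹ *ᵥ V) ⬝ᵥ (A *ᵥ ((Z ρ)⁻¹ *ᵥ V)))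
      (star I' ⬝ᵥ (A *ᵥ I) + star I ⬝ᵥ (A *ᵥ I')) ρ0 := by
    have := quadform_hasDerivAt A (fun ρ => (Z ρ)⁻¹ *ᵥ V) I' ρ0 hwk
    rwa [show (Z ρ0)⁻¹ *ᵥ V = I from hIw] at this
  have hden : HasDerivAt (fun ρ => star ((Z ρ)⁻¹ *ᵥ V) ⬝ᵥ (B *ᵥ ((Z ρ)⁻¹ *ᵥ V)))
      (star I' ⬝ᵥ (B *ᵥ I) + star I ⬝ᵥ (B *ᵥ I')) ρ0 := by
    have := quadform_hasDerivAt B (fun ρ => (Z ρ)⁻¹ *ᵥ V) I' ρ0 hwk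
    rwa [show (Z ρ0)⁻¹ *ᵥ V = I from hIw] at this
  -- real parts
  have hnre : HasDerivAt (fun ρ => (star ((Z ρ)⁻¹ *ᵥ V) ⬝ᵥ (A *ᵥ ((Z ρ)⁻¹ *ᵥ V))).re)
      (star I' ⬝ᵥ (A *ᵥ I) + star I ⬝ᵥ (A *ᵥ I')).re ρ0 :=
    Complex.reCLM.hasFDerivAt.comp_hasDerivAt ρ0 hnum
  have hdre : HasDerivAt (fun ρ => (star ((Z ρ)⁻¹ *ᵥ V) ⬝ᵥ (B *ᵥ ((Z ρ)⁻¹ *ᵥ V))).re)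
      (star I' ⬝ᵥ (B *ᵥ I) + star I ⬝ᵥ (B *ᵥ I')).re ρ0 :=
    Complex.reCLM.hasFDerivAt.comp_hasDerivAt ρ0 hden
  -- reality facts
  set n : ℂ := star I ⬝ᵥ (A *ᵥ I) with hn
  have hdconj : (starRingEnd ℂ) d = d := by rw [hd]; exact herm_dot_conj hB I I
  have hnconj : (starRingEnd ℂ) n = n := by rw [hn]; exact herm_dot_conj hA I I
  have hdim : d.im = 0 := by
    have h := congrArg Complex.im hdconj; simp [Complex.conj_im] at h; linarith
  have hnim : n.im = 0 := by
    have h := congrArg Complex.im hnconj; simp [Complex.conj_im] at h; linarith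
  have hdr0 : d.re ≠ 0 := fun h => hd0 (Complex.ext h hdim)
  have hgim : g.im = 0 := by
    rw [hg, Complex.div_im, hnim, hdim]; simp
  have hdC : d = (d.re : ℂ) := Complex.ext rfl (by simp [hdim])
  have hgC : g = (g.re : ℂ) := Complex.ext rfl (by simp [hgim])
  have hgd : n.re = g.re * d.re := by
    have hmul : g * d = n := by rw [hg]; field_simp
    have h := congrArg Complex.re hmul
    simp [Complex.mul_re, hgim] at h
    linarith
  -- the division derivative
  have hden0 : (fun ρ => (star ((Z ρ)⁻¹ *ᵥ V) ⬝ᵥ (B *ᵥ ((Z ρ)⁻¹ *ᵥ V))).re) ρ0 ≠ 0 := by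
    simpa [hIw, ← hd] using hdr0
  have hdiv := hnre.div hdre hden0
  -- key algebraic identities
  set a : ℂ := star I ⬝ᵥ (A *ᵥ I') with ha
  set b : ℂ := star I ⬝ᵥ (B *ᵥ I') with hb
  have haconj : star I' ⬝ᵥ (A *ᵥ I) = (starRingEnd ℂ) a := (herm_dot_conj hA I I').symm
  have hbconj : star I' ⬝ᵥ (B *ᵥ I) = (starRingEnd ℂ) b := (herm_dot_conj hB I I').symm
  have hZZi : Z ρ0 * Zi = 1 := Matrix.mul_nonsing_inv _ hdet
  have hI'eq : I' = -(Zi *ᵥ (W *ᵥ I)) := by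
    rw [hI'def, hI, Matrix.neg_mulVec, ← Matrix.mulVec_mulVec, ← Matrix.mulVec_mulVec]
  have hWI : W *ᵥ I = -(Z ρ0 *ᵥ I') := by
    rw [hI'eq, Matrix.mulVec_neg, neg_neg, Matrix.mulVec_mulVec, hZZi, Matrix.one_mulVec]
  have hlamWI : lam ⬝ᵥ (W *ᵥ I) = d⁻¹ * (a - g * b) := by
    calc lam ⬝ᵥ (W *ᵥ I) = -(lam ⬝ᵥ (Z ρ0 *ᵥ I')) := by rw [hWI, dotProduct_neg]
      _ = -(((Z ρ0)ᵀ *ᵥ lam) ⬝ᵥ I') := by rw [dotProduct_mulVec, ← Matrix.mulVec_transpose]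
      _ = (d⁻¹ • ((Aᵀ - g • Bᵀ) *ᵥ star I)) ⬝ᵥ I' := by
            rw [hlam, neg_dotProduct, neg_neg]
      _ = d⁻¹ * (((Aᵀ - g • Bᵀ) *ᵥ star I) ⬝ᵥ I') := by
            rw [smul_dotProduct, smul_eq_mul]
      _ = d⁻¹ * (star I ⬝ᵥ ((A - g • B) *ᵥ I')) := by
            rw [show Aᵀ - g • Bᵀ = (A - g • B)ᵀ by rw [Matrix.transpose_sub, Matrix.transpose_smul],
              Matrix.mulVec_transpose, ← dotProduct_mulVec]
      _ = d⁻¹ * (a - g * b) := by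
            rw [Matrix.sub_mulVec, dotProduct_sub, Matrix.smul_mulVec, dotProduct_smul,
              smul_eq_mul]
  have hIZ : (Z ρ0)⁻¹ *ᵥ V = I := hI.symm
  have hdinv : d⁻¹ = ((d.re⁻¹ : ℝ) : ℂ) := by
    conv_lhs => rw [hdC]
    exact (Complex.ofReal_inv _).symm
  -- finish
  refine hdiv.congr_deriv ?_
  rw [hIZ, ← hd, ← hn, haconj, hbconj, hlamWI, hdinv, hgd]
  rw [show g * b = (g.re : ℂ) * b from by rw [← hgC]]
  simp only [Complex.add_re, Complex.conj_re, Complex.sub_re, Complex.mul_re, Complex.mul_im,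
    Complex.ofReal_re, Complex.ofReal_im, Complex.sub_im, zero_mul, sub_zero, mul_zero]
  field_simp
  ring
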